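/- arXiv:1807.03663 — 7 statements merged into one kernel-verified Lean document; each statement's English description precedes it below -/
import Mathlib

section
/- Let M, N ∈ M_n(K) be two simultaneously diagonalizable matrices over a field K. There is a finite set B ⊆ K of size at most n(n-1)/2 such that for every t ∉ B, any invertible matrix T for which T⁻¹(M + tN)T is diagonal also satisfies that T⁻¹MT and T⁻¹NT are diagonal. -/
/-!
Write `P⁻¹ M P = diagonal d` and `P⁻¹ N P = diagonal e`, so that
`P⁻¹ (M + t • N) P = diagonal (d + t • e)`. Two of the lines `t ↦ d i + t * e i` either coincide
or cross at most once, so outside a set of at most `n.choose 2` parameters `t`, equal entries of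
`d + t • e` force equal entries of `d` and of `e`. Lagrange interpolation then gives polynomials
`p`, `q` with `M = p (M + t • N)` and `N = q (M + t • N)`. Polynomial evaluation commutes with
conjugation and preserves diagonal matrices, so every `T` diagonalizing `M + t • N` diagonalizes
`M` and `N`.
-/

open Matrix Polynomial

theorem Polynomial.exists_eval_eq_of_factorsThrough {ι K : Type*} [Fintype ι] [Field K]
    {f g : ι → K} (hgf : g.FactorsThrough f) : ∃ p : K[X], ∀ i, p.eval (f i) = g i := by
  classical
  let r : K → K := fun x => if h : ∃ i, f i = x then g h.choose else 0
  refine ⟨Lagrange.interpolate (Finset.univ.image f) id r, fun i => ?_⟩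
  have hr : r (f i) = g i := by
    have h : ∃ j, f j = f i := ⟨i, rfl⟩
    simp only [r, dif_pos h]
    exact hgf h.choose_spec
  rw [← hr]
  exact Lagrange.eval_interpolate_at_node r (Set.injOn_id _)
    (Finset.mem_image_of_mem f (Finset.mem_univ i))

section CollisionSet

variable {ι K : Type*} [Field K] (d e : ι → K)

/-- The parameter `t` at which the lines `t ↦ d i + t * e i` and `t ↦ d j + t * e j` cross
(junk value `0` when `e i = e j`). -/
def collisionParam : Sym2 ι → K :=
  Sym2.lift ⟨fun i j => (d j - d i) / (e i - e j), fun i j => by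
    simp only [← neg_sub (d i), ← neg_sub (e j), neg_div_neg_eq]⟩

def collisionSet [Fintype ι] [DecidableEq ι] [DecidableEq K] : Finset K :=
  (Finset.univ.offDiag.image Sym2.mk.uncurry).image (collisionParam d e)

variable [Fintype ι] [DecidableEq ι] [DecidableEq K]

theorem card_collisionSet_le : (collisionSet d e).card ≤ (Fintype.card ι).choose 2 :=
  Finset.card_image_le.trans (Sym2.card_image_offDiag _).le

theorem eq_and_eq_of_add_smul_eq {t : K} (ht : t ∉ collisionSet d e) {i j : ι}
    (h : (d + t • e) i = (d + t • e) j) : d i = d j ∧ e i = e j := by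
  simp only [Pi.add_apply, Pi.smul_apply, smul_eq_mul] at h
  by_cases he : e i = e j
  · exact ⟨by rwa [he, add_left_inj] at h, he⟩
  refine absurd ?_ ht
  have hij : i ≠ j := fun hij => he (hij ▸ rfl)
  have hcross : collisionParam d e s(i, j) = t := by
    rw [collisionParam, Sym2.lift_mk, div_eq_iff (sub_ne_zero.mpr he)]
    linear_combination -h
  rw [← hcross]
  exact Finset.mem_image_of_mem _ (Finset.mem_image_of_mem _
    (Finset.mem_offDiag.mpr ⟨Finset.mem_univ _, Finset.mem_univ _, hij⟩))

end CollisionSet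

namespace Matrix

section CommRing

variable {n R : Type*} [Fintype n] [DecidableEq n] [CommRing R]

theorem aeval_diagonal (d : n → R) (p : R[X]) :
    aeval (diagonal d) p = diagonal fun i => p.eval (d i) := by
  rw [← diagonalAlgHom_apply R, aeval_algHom_apply, aeval_pi_apply]
  simp

theorem IsDiag.aeval {A : Matrix n n R} (hA : A.IsDiag) (p : R[X]) : (aeval A p).IsDiag := by
  rw [← hA.diagonal_diag, aeval_diagonal]
  exact isDiag_diagonal _

theorem aeval_units_conj (u : (Matrix n n R)ˣ) (A : Matrix n n R) (p : R[X]) :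
    aeval ((↑u⁻¹ : Matrix n n R) * A * (u : Matrix n n R)) p =
      (↑u⁻¹ : Matrix n n R) * aeval A p * (u : Matrix n n R) := by
  simpa only [MulSemiringAction.toAlgEquiv_apply, ConjAct.units_smul_def,
    ConjAct.ofConjAct_toConjAct, inv_inv] using
    aeval_algHom_apply (MulSemiringAction.toAlgEquiv R _ (ConjAct.toConjAct u⁻¹)) A p

theorem IsDiag.units_conj_aeval {u : (Matrix n n R)ˣ} {A : Matrix n n R}
    (hA : ((↑u⁻¹ : Matrix n n R) * A * (u : Matrix n n R)).IsDiag) (p : R[X]) :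
    ((↑u⁻¹ : Matrix n n R) * Polynomial.aeval A p * (u : Matrix n n R)).IsDiag := by
  rw [← aeval_units_conj]
  exact hA.aeval p

end CommRing

theorem exists_eq_aeval_of_units_conj_eq_diagonal {n K : Type*} [Fintype n] [DecidableEq n]
    [Field K] (u : (Matrix n n K)ˣ) {A B : Matrix n n K} {a b : n → K}
    (hA : (↑u⁻¹ : Matrix n n K) * A * (u : Matrix n n K) = diagonal a)
    (hB : (↑u⁻¹ : Matrix n n K) * B * (u : Matrix n n K) = diagonal b)
    (hba : b.FactorsThrough a) :
    ∃ p : K[X], B = aeval A p := by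
  obtain ⟨p, hp⟩ := exists_eval_eq_of_factorsThrough hba
  refine ⟨p, ?_⟩
  have hconj : (↑u⁻¹ : Matrix n n K) * B * (u : Matrix n n K) =
      (↑u⁻¹ : Matrix n n K) * aeval A p * (u : Matrix n n K) := by
    rw [← aeval_units_conj, hA, hB, aeval_diagonal]
    exact congrArg diagonal (funext fun i => (hp i).symm)
  simpa only [Units.mul_left_inj, Units.mul_right_inj] using hconj

end Matrix

theorem simultaneous_diagonalization_bad_set {n : ℕ} {K : Type*} [Field K]
    (M N : Matrix (Fin n) (Fin n) K)
    (hsim : ∃ P : GL (Fin n) K,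
        ((↑P⁻¹ : Matrix (Fin n) (Fin n) K) * M * (P : Matrix (Fin n) (Fin n) K)).IsDiag ∧
        ((↑P⁻¹ : Matrix (Fin n) (Fin n) K) * N * (P : Matrix (Fin n) (Fin n) K)).IsDiag) :
    ∃ B : Finset K, B.card ≤ n * (n - 1) / 2 ∧
      ∀ t : K, t ∉ B → ∀ T : GL (Fin n) K,
        ((↑T⁻¹ : Matrix (Fin n) (Fin n) K) * (M + t • N) * (T : Matrix (Fin n) (Fin n) K)).IsDiag →
        ((↑T⁻¹ : Matrix (Fin n) (Fin n) K) * M * (T : Matrix (Fin n) (Fin n) K)).IsDiag ∧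
        ((↑T⁻¹ : Matrix (Fin n) (Fin n) K) * N * (T : Matrix (Fin n) (Fin n) K)).IsDiag := by
  classical
  obtain ⟨P, hM, hN⟩ := hsim
  set d := diag ((↑P⁻¹ : Matrix (Fin n) (Fin n) K) * M * (P : Matrix (Fin n) (Fin n) K))
  set e := diag ((↑P⁻¹ : Matrix (Fin n) (Fin n) K) * N * (P : Matrix (Fin n) (Fin n) K))
  refine ⟨collisionSet d e, ?_, fun t ht T hT => ?_⟩
  · simpa [Nat.choose_two_right] using card_collisionSet_le d e
  have hpencil :
      (↑P⁻¹ : Matrix (Fin n) (Fin n) K) * (M + t • N) * (P : Matrix (Fin n) (Fin n) K) =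
        diagonal (d + t • e) := by
    rw [Matrix.mul_add, Matrix.add_mul, Matrix.mul_smul, Matrix.smul_mul, ← hM.diagonal_diag,
      ← hN.diagonal_diag, ← diagonal_smul, diagonal_add]
    rfl
  obtain ⟨p, hp⟩ := exists_eq_aeval_of_units_conj_eq_diagonal P hpencil hM.diagonal_diag.symm
    fun _ _ h => (eq_and_eq_of_add_smul_eq d e ht h).1
  obtain ⟨q, hq⟩ := exists_eq_aeval_of_units_conj_eq_diagonal P hpencil hN.diagonal_diag.symm
    fun _ _ h => (eq_and_eq_of_add_smul_eq d e ht h).2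
  constructor
  · rw [hp]
    exact hT.units_conj_aeval p
  · rw [hq]
    exact hT.units_conj_aeval q
end

section
/- Let K be an infinite field, and let M, N ∈ M_n(K) be simultaneously diagonalizable matrices. If t is drawn uniformly at random from a finite set S ⊆ K, then with probability at least 1 − n(n−1)/(2|S|), every transition matrix diagonalizing M + tN also diagonalizes M and N. -/
/-!
Conjugate by a common diagonalizer `P`, so that `M` and `N` become `diagonal μ` and `diagonal ν`
and `M + t • N` becomes `diagonal (μ + t • ν)`. If `T⁻¹ (M + t • N) T` is diagonal, then
`W = P⁻¹ T` intertwines `diagonal (μ + t • ν)` with a diagonal matrix, hence also intertwines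
`diagonal (f ∘ (μ + t • ν))` with a diagonal matrix for every function `f`. So `T` diagonalizes
`M` and `N` as soon as `μ` and `ν` factor through `μ + t • ν`. This fails only when
`μ i + t ν i = μ j + t ν j` for some `i < j` with `(μ i, ν i) ≠ (μ j, ν j)`, and each of the
at most `n(n-1)/2` such pairs excludes at most one value of `t`.
-/

open Matrix Finset Function

namespace Matrix

variable {ι R : Type*} [Fintype ι] [DecidableEq ι] [CommRing R]

theorem diagonal_comp_mul_eq_mul_diagonal_comp [NoZeroDivisors R] {W : Matrix ι ι R}
    {d e : ι → R} (h : diagonal d * W = W * diagonal e) (f : R → R) :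
    diagonal (f ∘ d) * W = W * diagonal (f ∘ e) := by
  ext i k
  have hik : W i k * d i = W i k * e k := by simpa [mul_comm] using congr_fun₂ h i k
  rw [diagonal_mul, mul_diagonal]
  by_cases hW : W i k = 0
  · simp [hW]
  · simp [mul_left_cancel₀ hW hik, mul_comm]

theorem IsDiag.inv_mul_diagonal_comp_mul [NoZeroDivisors R] {W : GL ι R} {d : ι → R}
    (h : ((↑W⁻¹ : Matrix ι ι R) * diagonal d * (W : Matrix ι ι R)).IsDiag) (f : R → R) :
    ((↑W⁻¹ : Matrix ι ι R) * diagonal (f ∘ d) * (W : Matrix ι ι R)).IsDiag := by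
  set e := ((↑W⁻¹ : Matrix ι ι R) * diagonal d * (W : Matrix ι ι R)).diag
  have hde : diagonal d * (W : Matrix ι ι R) = W * diagonal e := by
    rw [← Units.inv_mul_eq_iff_eq_mul, ← mul_assoc, h.diagonal_diag]
  rw [mul_assoc, diagonal_comp_mul_eq_mul_diagonal_comp hde, ← mul_assoc, Units.inv_mul,
    one_mul]
  exact isDiag_diagonal _

theorem inv_mul_mul_eq_conj (P T : GL ι R) (A : Matrix ι ι R) :
    (↑T⁻¹ : Matrix ι ι R) * A * (T : Matrix ι ι R) =
      (↑(P⁻¹ * T)⁻¹ : Matrix ι ι R) * ((↑P⁻¹ : Matrix ι ι R) * A * (P : Matrix ι ι R)) *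
        (↑(P⁻¹ * T) : Matrix ι ι R) := by
  simp [mul_assoc]

theorem isDiag_of_isDiag_add_smul [NoZeroDivisors R] {P T : GL ι R} {M N : Matrix ι ι R}
    {μ ν : ι → R} {t : R}
    (hM : (↑P⁻¹ : Matrix ι ι R) * M * (P : Matrix ι ι R) = diagonal μ)
    (hN : (↑P⁻¹ : Matrix ι ι R) * N * (P : Matrix ι ι R) = diagonal ν)
    (hμ : FactorsThrough μ (μ + t • ν)) (hν : FactorsThrough ν (μ + t • ν))
    (hT : ((↑T⁻¹ : Matrix ι ι R) * (M + t • N) * (T : Matrix ι ι R)).IsDiag) :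
    ((↑T⁻¹ : Matrix ι ι R) * M * (T : Matrix ι ι R)).IsDiag ∧
      ((↑T⁻¹ : Matrix ι ι R) * N * (T : Matrix ι ι R)).IsDiag := by
  have hMN : (↑P⁻¹ : Matrix ι ι R) * (M + t • N) * (P : Matrix ι ι R) =
      diagonal (μ + t • ν) := by
    rw [mul_add, add_mul, Matrix.mul_smul, Matrix.smul_mul, hM, hN, ← diagonal_smul]
    exact diagonal_add μ (t • ν)
  rw [inv_mul_mul_eq_conj P, hMN] at hT
  have key {A : Matrix ι ι R} {d : ι → R}
      (hA : (↑P⁻¹ : Matrix ι ι R) * A * (P : Matrix ι ι R) = diagonal d)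
      (hd : FactorsThrough d (μ + t • ν)) :
      ((↑T⁻¹ : Matrix ι ι R) * A * (T : Matrix ι ι R)).IsDiag := by
    obtain ⟨f, rfl⟩ := (factorsThrough_iff d).mp hd
    rw [inv_mul_mul_eq_conj P, hA]
    exact hT.inv_mul_diagonal_comp_mul f
  exact ⟨key hM hμ, key hN hν⟩

end Matrix

section Counting

variable {ι R : Type*} [CommRing R] [NoZeroDivisors R]

theorem card_filter_add_mul_eq_le_one [DecidableEq R] {a b a' b' : R}
    (h : (a, b) ≠ (a', b')) (S : Finset R) : #{t ∈ S | a + t * b = a' + t * b'} ≤ 1 := by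
  refine card_le_one.mpr fun t ht s hs => ?_
  rw [mem_filter] at ht hs
  have hb : b ≠ b' := by
    rintro rfl
    exact h (by rw [add_right_cancel ht.2])
  have : (t - s) * (b - b') = 0 := by linear_combination ht.2 - hs.2
  simpa [sub_eq_zero, hb] using this

open scoped Classical in
theorem card_filter_not_factorsThrough_le [Fintype ι] [LinearOrder ι] (μ ν : ι → R)
    (S : Finset R) :
    #{t ∈ S | ¬(FactorsThrough μ (μ + t • ν) ∧ FactorsThrough ν (μ + t • ν))} ≤
      (Fintype.card ι).choose 2 := by
  set pairs : Finset (ι × ι) := {p | p.1 < p.2 ∧ (μ p.1, ν p.1) ≠ (μ p.2, ν p.2)}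
  set collide : ι × ι → Finset R :=
    fun p => {t ∈ S | μ p.1 + t * ν p.1 = μ p.2 + t * ν p.2}
  have hsub : {t ∈ S | ¬(FactorsThrough μ (μ + t • ν) ∧ FactorsThrough ν (μ + t • ν))} ⊆
      pairs.biUnion collide := by
    intro t ht
    rw [mem_filter] at ht
    by_contra hmem
    have hlt : ∀ i j, i < j → μ i + t * ν i = μ j + t * ν j → μ i = μ j ∧ ν i = ν j := by
      intro i j hij heq
      by_contra hne
      exact hmem (mem_biUnion.mpr ⟨(i, j), mem_filter.mpr ⟨mem_univ _, hij, by simpa using hne⟩,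
        mem_filter.mpr ⟨ht.1, heq⟩⟩)
    have hsep : ∀ i j, (μ + t • ν) i = (μ + t • ν) j → μ i = μ j ∧ ν i = ν j := by
      intro i j heq
      simp only [Pi.add_apply, Pi.smul_apply, smul_eq_mul] at heq
      rcases lt_trichotomy i j with hij | rfl | hji
      · exact hlt i j hij heq
      · exact ⟨rfl, rfl⟩
      · exact (hlt j i hji heq.symm).imp Eq.symm Eq.symm
    exact ht.2 ⟨fun i j h => (hsep i j h).1, fun i j h => (hsep i j h).2⟩
  calc _ ≤ #(pairs.biUnion collide) := card_le_card hsub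
    _ ≤ #pairs * 1 := card_biUnion_le_card_mul _ _ _ fun p hp =>
        card_filter_add_mul_eq_le_one (mem_filter.mp hp).2.2 S
    _ ≤ #{p : ι × ι | p.1 < p.2} := by
        rw [mul_one]
        exact card_le_card (monotone_filter_right _ fun p _ hp => hp.1)
    _ = (Fintype.card ι).choose 2 := Fintype.card_product_filter_lt

end Counting

theorem one_sub_div_card_le_card_filter_div {α : Type*} {S : Finset α} (hS : S.Nonempty)
    (p : α → Prop) [DecidablePred p] {m : ℝ} (h : (#{x ∈ S | ¬p x} : ℝ) ≤ m) :
    1 - m / #S ≤ (#{x ∈ S | p x} : ℝ) / #S := by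
  have hS' : (0 : ℝ) < #S := by exact_mod_cast hS.card_pos
  have hsplit : (#{x ∈ S | p x} + #{x ∈ S | ¬p x} : ℝ) = #S := by
    exact_mod_cast card_filter_add_card_filter_not p
  rw [one_sub_div hS'.ne', div_le_div_iff_of_pos_right hS']
  linarith

open scoped Classical in
theorem random_combination_diagonalizes_general {n : ℕ} {K : Type*} [Field K]
    (M N : Matrix (Fin n) (Fin n) K)
    (hsim : ∃ P : GL (Fin n) K,
        ((↑P⁻¹ : Matrix (Fin n) (Fin n) K) * M * (P : Matrix (Fin n) (Fin n) K)).IsDiag ∧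
        ((↑P⁻¹ : Matrix (Fin n) (Fin n) K) * N * (P : Matrix (Fin n) (Fin n) K)).IsDiag)
    (S : Finset K) (hS : S.Nonempty) :
    (1 : ℝ) - (n * (n - 1) : ℝ) / (2 * S.card) ≤
      ((S.filter fun t =>
          ∀ T : GL (Fin n) K,
            ((↑T⁻¹ : Matrix (Fin n) (Fin n) K) * (M + t • N) *
                (T : Matrix (Fin n) (Fin n) K)).IsDiag →
            ((↑T⁻¹ : Matrix (Fin n) (Fin n) K) * M * (T : Matrix (Fin n) (Fin n) K)).IsDiag ∧
            ((↑T⁻¹ : Matrix (Fin n) (Fin n) K) * N *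
                (T : Matrix (Fin n) (Fin n) K)).IsDiag).card : ℝ) / (S.card : ℝ) := by
  obtain ⟨P, hPM, hPN⟩ := hsim
  set μ := ((↑P⁻¹ : Matrix (Fin n) (Fin n) K) * M * (P : Matrix (Fin n) (Fin n) K)).diag
  set ν := ((↑P⁻¹ : Matrix (Fin n) (Fin n) K) * N * (P : Matrix (Fin n) (Fin n) K)).diag
  have hbad := card_filter_not_factorsThrough_le μ ν S
  rw [Fintype.card_fin] at hbad
  rw [← div_div, ← Nat.cast_choose_two]
  refine one_sub_div_card_le_card_filter_div hS _ (Nat.cast_le.mpr ?_)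
  refine (card_le_card (monotone_filter_right S fun t _ hnot_good => ?_)).trans hbad
  exact fun hsep => hnot_good fun T => isDiag_of_isDiag_add_smul hPM.diagonal_diag.symm
    hPN.diagonal_diag.symm hsep.1 hsep.2

open scoped Classical in
theorem random_combination_diagonalizes {n : ℕ} {K : Type*} [Field K] [Infinite K]
    (M N : Matrix (Fin n) (Fin n) K)
    (hsim : ∃ P : GL (Fin n) K,
        ((↑P⁻¹ : Matrix (Fin n) (Fin n) K) * M * (P : Matrix (Fin n) (Fin n) K)).IsDiag ∧
        ((↑P⁻¹ : Matrix (Fin n) (Fin n) K) * N * (P : Matrix (Fin n) (Fin n) K)).IsDiag)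
    (S : Finset K) (hS : S.Nonempty) :
    (1 : ℝ) - (n * (n - 1) : ℝ) / (2 * S.card) ≤
      ((S.filter fun t =>
          ∀ T : GL (Fin n) K,
            ((↑T⁻¹ : Matrix (Fin n) (Fin n) K) * (M + t • N) *
                (T : Matrix (Fin n) (Fin n) K)).IsDiag →
            ((↑T⁻¹ : Matrix (Fin n) (Fin n) K) * M * (T : Matrix (Fin n) (Fin n) K)).IsDiag ∧
            ((↑T⁻¹ : Matrix (Fin n) (Fin n) K) * N *
                (T : Matrix (Fin n) (Fin n) K)).IsDiag).card : ℝ) / (S.card : ℝ) :=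
  random_combination_diagonalizes_general M N hsim S hS
end

section
/- Let m = x_1^{α_1} ⋯ x_n^{α_n} be a monomial over a field K of characteristic 0 with all α_i ≥ 1. An invertible matrix A ∈ GL_n(K) satisfies m(A·x) = m(x) if and only if A = D·P where P is a permutation matrix associated to a permutation π with α_i = α_{π(i)} for all i, and D = diag(λ_1,...,λ_n) with Π_{i=1}^n λ_i^{α_i} = 1. -/
/-!
Substituting `x ↦ A x` turns `∏ xᵢ ^ αᵢ` into `∏ Lᵢ ^ αᵢ`, where `Lᵢ` is the linear form given by
the `i`-th row of `A`. Each variable `x_k` is prime and divides this product, so it divides some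
`Lᵢ`; a nonzero form of degree at most one divisible by `x_k` is a scalar multiple of `x_k`. Hence
the rows of `A` are scalar multiples of distinct unit vectors, i.e. `A = diag(λ) P_π`, and comparing
the monomials `∏ (λᵢ x_{π i}) ^ αᵢ` and `∏ xᵢ ^ αᵢ` yields `α ∘ π = α` and `∏ λᵢ ^ αᵢ = 1`.
-/

open MvPolynomial Matrix

namespace MvPolynomial

section CommSemiring

variable {σ R : Type*} [CommSemiring R]

theorem eq_of_C_mul_X_eq_C_mul_X {a b : R} {k k' : σ} (ha : a ≠ 0)
    (h : C a * X k = (C b * X k' : MvPolynomial σ R)) : k = k' := by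
  simp only [C_mul_X_eq_monomial, monomial_eq_monomial_iff, ha, false_and, or_false] at h
  exact (Finsupp.single_left_inj one_ne_zero).mp h.1

section Fintype

variable [Fintype σ]

theorem totalDegree_sum_smul_X_le (v : σ → R) :
    (∑ j, v j • X j : MvPolynomial σ R).totalDegree ≤ 1 :=
  totalDegree_finsetSum_le fun j _ =>
    (totalDegree_smul_le _ _).trans ((totalDegree_monomial_le _ _).trans_eq (by simp))

theorem coeff_single_one_sum_smul_X [DecidableEq σ] (v : σ → R) (j : σ) :
    coeff (Finsupp.single j 1) (∑ j', v j' • X j' : MvPolynomial σ R) = v j := by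
  simp [coeff_sum, coeff_X, Finsupp.single_left_inj one_ne_zero]

theorem sum_smul_X_eq_C_mul_X_iff [DecidableEq σ] (v : σ → R) (c : R) (k : σ) :
    ∑ j, v j • X j = C c * (X k : MvPolynomial σ R) ↔ v = (Pi.single k c : σ → R) := by
  have hsingle : ∑ j, (Pi.single k c : σ → R) j • X j = C c * (X k : MvPolynomial σ R) := by
    simp [Pi.single_apply, smul_eq_C_mul]
  refine ⟨fun h => ?_, fun h => h ▸ hsingle⟩
  ext j
  rw [← coeff_single_one_sum_smul_X v j, h, ← hsingle, coeff_single_one_sum_smul_X]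

theorem prod_X_pow_eq_monomial_equivFunOnFinite (α : σ → ℕ) :
    ∏ i, (X i : MvPolynomial σ R) ^ α i = monomial (Finsupp.equivFunOnFinite.symm α) 1 := by
  rw [monomial_eq, C_1, one_mul, Finsupp.prod_fintype _ _ fun i => pow_zero _]
  simp

theorem C_mul_prod_X_pow_eq_prod_X_pow_iff [Nontrivial R] (c : R) (β α : σ → ℕ) :
    C c * ∏ i, (X i : MvPolynomial σ R) ^ β i = ∏ i, X i ^ α i ↔ c = 1 ∧ β = α := by
  simp only [prod_X_pow_eq_monomial_equivFunOnFinite, C_mul_monomial, mul_one,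
    monomial_eq_monomial_iff, one_ne_zero, and_false, or_false,
    Finsupp.equivFunOnFinite.symm.injective.eq_iff]
  exact and_comm

theorem prod_C_mul_X_pow (π : Equiv.Perm σ) (lam : σ → R) (α : σ → ℕ) :
    ∏ i, (C (lam i) * X (π i) : MvPolynomial σ R) ^ α i
      = C (∏ i, lam i ^ α i) * ∏ j, X j ^ α (π.symm j) := by
  simp only [mul_pow, Finset.prod_mul_distrib, map_prod, C_pow]
  congr 1
  exact (π.symm.prod_comp fun j => X (π j) ^ α j).symm.trans (by simp)

end Fintype

end CommSemiring

section Domain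

variable {σ R : Type*} [CommRing R] [IsDomain R]

theorem exists_eq_C_mul_X_of_X_dvd {p : MvPolynomial σ R} {k : σ} (hp : p ≠ 0)
    (hdeg : p.totalDegree ≤ 1) (hdvd : X k ∣ p) : ∃ c ≠ 0, p = C c * X k := by
  obtain ⟨q, rfl⟩ := hdvd
  have hq : q ≠ 0 := right_ne_zero_of_mul hp
  rw [totalDegree_mul_of_isDomain (X_ne_zero k) hq, totalDegree_X] at hdeg
  have hq_const : q = C (q.coeff 0) := totalDegree_eq_zero_iff_eq_C.mp (by omega)
  refine ⟨q.coeff 0, fun h0 => hq (by rw [hq_const, h0, C_0]), ?_⟩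
  rw [mul_comm, ← hq_const]

theorem exists_perm_of_prod_pow_eq_prod_X_pow [Fintype σ] {L : σ → MvPolynomial σ R}
    {α : σ → ℕ} (hα : ∀ i, α i ≠ 0) (hL : ∀ i, (L i).totalDegree ≤ 1)
    (h : ∏ i, L i ^ α i = ∏ i, X i ^ α i) :
    ∃ (π : Equiv.Perm σ) (lam : σ → R), ∀ i, L i = C (lam i) * X (π i) := by
  have hL0 : ∀ i, L i ≠ 0 := fun i hi =>
    (Finset.prod_ne_zero_iff.mpr fun j _ => pow_ne_zero (α j) (X_ne_zero j))
      (h ▸ Finset.prod_eq_zero (Finset.mem_univ i) (by rw [hi, zero_pow (hα i)]))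
  have hcover : ∀ k, ∃ i, ∃ c ≠ 0, L i = C c * X k := by
    intro k
    have hdvd : X k ∣ ∏ i, L i ^ α i :=
      h ▸ (dvd_pow_self _ (hα k)).trans (Finset.dvd_prod_of_mem _ (Finset.mem_univ k))
    obtain ⟨i, -, hi⟩ := X_prime.exists_mem_finset_dvd hdvd
    exact ⟨i, exists_eq_C_mul_X_of_X_dvd (hL0 i) (hL i) (X_prime.dvd_of_dvd_pow hi)⟩
  choose τ c hc hτ using hcover
  have hτ_inj : Function.Injective τ := fun k k' hkk' =>
    eq_of_C_mul_X_eq_C_mul_X (hc k) ((hτ k).symm.trans (hkk' ▸ hτ k'))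
  let e := Equiv.ofBijective τ (Finite.injective_iff_bijective.mp hτ_inj)
  refine ⟨e.symm, fun i => c (e.symm i), fun i => ?_⟩
  have hi := hτ (e.symm i)
  rwa [show τ (e.symm i) = i from e.apply_symm_apply i] at hi

end Domain

end MvPolynomial

namespace Matrix

variable {n R : Type*} [Fintype n] [DecidableEq n] [Semiring R]

theorem diagonal_mul_permMatrix_apply (lam : n → R) (π : Equiv.Perm n) (i : n) :
    (diagonal lam * π.permMatrix R : Matrix n n R) i = Pi.single (π i) (lam i) := by
  funext j
  simp [diagonal_mul, PEquiv.toMatrix_apply, Pi.single_apply, eq_comm]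

theorem eq_diagonal_mul_permMatrix_iff (M : Matrix n n R) (lam : n → R) (π : Equiv.Perm n) :
    M = diagonal lam * π.permMatrix R ↔ ∀ i, M i = Pi.single (π i) (lam i) := by
  simp only [← diagonal_mul_permMatrix_apply]
  exact funext_iff

end Matrix

theorem invariance_group_of_monomial_general {n : ℕ} {K : Type*} [Field K]
    (α : Fin n → ℕ) (hα : ∀ i, 1 ≤ α i) (A : GL (Fin n) K) :
    aeval (R := K) (fun i => ∑ j, (A : Matrix (Fin n) (Fin n) K) i j • (X j : MvPolynomial (Fin n) K))
        (∏ i, X i ^ α i) = ∏ i, (X i : MvPolynomial (Fin n) K) ^ α i ↔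
      ∃ (π : Equiv.Perm (Fin n)) (lam : Fin n → K),
        (∀ i, α (π i) = α i) ∧ (∏ i, lam i ^ α i = 1) ∧
        (A : Matrix (Fin n) (Fin n) K) = Matrix.diagonal lam * π.permMatrix K := by
  have hinvariant (π : Equiv.Perm (Fin n)) :
      (fun j => α (π.symm j)) = α ↔ ∀ i, α (π i) = α i := by
    rw [funext_iff, ← π.forall_congr_right]
    simp only [Equiv.symm_apply_apply, eq_comm]
  simp only [map_prod, map_pow, aeval_X, eq_diagonal_mul_permMatrix_iff,
    ← sum_smul_X_eq_C_mul_X_iff]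
  constructor
  · intro h
    obtain ⟨π, lam, hrows⟩ := exists_perm_of_prod_pow_eq_prod_X_pow
      (fun i => Nat.one_le_iff_ne_zero.mp (hα i)) (fun i => totalDegree_sum_smul_X_le _) h
    simp only [hrows, prod_C_mul_X_pow, C_mul_prod_X_pow_eq_prod_X_pow_iff, hinvariant] at h
    exact ⟨π, lam, h.2, h.1, hrows⟩
  · rintro ⟨π, lam, hπ, hlam, hrows⟩
    simp only [hrows, prod_C_mul_X_pow, C_mul_prod_X_pow_eq_prod_X_pow_iff, hinvariant]
    exact ⟨hlam, hπ⟩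

theorem invariance_group_of_monomial {n : ℕ} {K : Type*} [Field K] [CharZero K]
    (α : Fin n → ℕ) (hα : ∀ i, 1 ≤ α i) (A : GL (Fin n) K) :
    aeval (R := K) (fun i => ∑ j, (A : Matrix (Fin n) (Fin n) K) i j • (X j : MvPolynomial (Fin n) K))
        (∏ i, X i ^ α i) = ∏ i, (X i : MvPolynomial (Fin n) K) ^ α i ↔
      ∃ (π : Equiv.Perm (Fin n)) (lam : Fin n → K),
        (∀ i, α (π i) = α i) ∧ (∏ i, lam i ^ α i = 1) ∧
        (A : Matrix (Fin n) (Fin n) K) = Matrix.diagonal lam * π.permMatrix K :=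
  invariance_group_of_monomial_general α hα A
end

section
/- If an invertible matrix A over a field K of characteristic 0 fixes the monomial m = x_1^{α_1}⋯x_n^{α_n} (with all α_i ≥ 1) under the substitution action, then A sends each variable x_i to a scalar multiple λ_i x_{π(i)} of another variable, where π is a permutation with α_{π(i)} = α_i, i.e., each column of A has exactly one nonzero entry. -/
open MvPolynomial Matrix

/-!
Evaluating the identity at points turns it into `∏ᵢ (A x)ᵢ ^ αᵢ = ∏ᵢ xᵢ ^ αᵢ` for all `x : Kⁿ`.
If a row of `A` had two nonzero entries, some `x` without zero coordinates would annihilate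
that row, so the left side would vanish and the right side would not. Hence each row has a single
nonzero entry, and invertibility makes their positions a permutation `π`. The identity then reads
`c * ∏ᵢ x (π i) ^ αᵢ = ∏ᵢ xᵢ ^ αᵢ`; putting `x = 1` gives `c = 1`, and putting `2` in one coordinate
and `1` elsewhere compares powers of `2`, which are distinct in characteristic zero.
-/

section

variable {ι : Type*} [Fintype ι]

theorem eval_aeval_sum_smul_X {R : Type*} [CommSemiring R]
    (M : Matrix ι ι R) (x : ι → R) (p : MvPolynomial ι R) :
    eval x (aeval (fun i => ∑ j, M i j • (X j : MvPolynomial ι R)) p) = eval (M *ᵥ x) p := by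
  induction p using MvPolynomial.induction_on with
  | C a => simp
  | add p q hp hq => simp only [map_add, hp, hq]
  | mul_X p i hp =>
    simp only [map_mul, hp, aeval_X, eval_X, map_sum, smul_eval, mulVec, dotProduct]

theorem exists_forall_ne_zero_dotProduct_eq_zero_of_dotProduct_ne {K : Type*} [Field K]
    [DecidableEq ι] {v y : ι → K} {j : ι} (hj : v j ≠ 0) (hy : ∀ l, y l ≠ 0)
    (hvy : v ⬝ᵥ y ≠ v j * y j) : ∃ x : ι → K, (∀ l, x l ≠ 0) ∧ v ⬝ᵥ x = 0 := by
  refine ⟨y + Pi.single j (-(v ⬝ᵥ y) / v j), fun l => ?_, ?_⟩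
  · rcases eq_or_ne l j with rfl | hl
    · intro h
      apply hvy
      simp only [Pi.add_apply, Pi.single_eq_same] at h
      field_simp at h
      linear_combination -h
    · simpa [hl] using hy l
  · rw [dotProduct_add, dotProduct_single]
    field_simp
    ring

theorem exists_forall_ne_zero_dotProduct_eq_zero {K : Type*} [Field K] [NeZero (2 : K)]
    {v : ι → K} {j k : ι} (hjk : j ≠ k) (hj : v j ≠ 0) (hk : v k ≠ 0) :
    ∃ x : ι → K, (∀ l, x l ≠ 0) ∧ v ⬝ᵥ x = 0 := by
  classical
  -- The candidates `1` and `1 + Pi.single k 1` have dot products with `v` differing by `v k ≠ 0`.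
  by_cases h1 : v ⬝ᵥ 1 = v j
  · refine exists_forall_ne_zero_dotProduct_eq_zero_of_dotProduct_ne hj
      (y := 1 + Pi.single k 1) (fun l => ?_) ?_
    · rcases eq_or_ne l k with rfl | hl
      · simpa [one_add_one_eq_two] using two_ne_zero
      · simp [hl]
    · simp [dotProduct_add, dotProduct_single, h1, hjk, hk]
  · exact exists_forall_ne_zero_dotProduct_eq_zero_of_dotProduct_ne hj (y := 1)
      (fun _ => one_ne_zero) (by simpa using h1)

theorem Matrix.exists_perm_ne_zero_iff_of_det_ne_zero {R : Type*} [CommRing R] [DecidableEq ι]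
    {M : Matrix ι ι R} (hdet : M.det ≠ 0) (hrow : ∀ i j k, M i j ≠ 0 → M i k ≠ 0 → j = k) :
    ∃ π : Equiv.Perm ι, ∀ i j, M i j ≠ 0 ↔ j = π i := by
  have hex : ∀ i, ∃ j, M i j ≠ 0 := fun i => by
    by_contra! h
    exact hdet (det_eq_zero_of_row_eq_zero i h)
  choose σ hσ using hex
  have hsurj : Function.Surjective σ := fun k => by
    by_contra! h
    exact hdet (det_eq_zero_of_column_eq_zero k fun i => by
      by_contra hik
      exact h i (hrow i _ _ (hσ i) hik))
  refine ⟨Equiv.ofBijective σ (Finite.injective_iff_surjective.2 hsurj).bijective_of_finite,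
    fun i j => ⟨fun h => hrow i _ _ h (hσ i), ?_⟩⟩
  rintro rfl
  exact hσ i

theorem mulVec_apply_eq_mul_of_eq_zero {R : Type*} [NonUnitalNonAssocSemiring R]
    {M : Matrix ι ι R} {π : ι → ι} (hM : ∀ i j, j ≠ π i → M i j = 0) (x : ι → R) (i : ι) :
    (M *ᵥ x) i = M i (π i) * x (π i) :=
  Fintype.sum_eq_single (π i) fun j hj => by simp [hM i j hj]

theorem eq_of_forall_prod_pow_eq {R : Type*} [CommSemiring R] [CharZero R] {α β : ι → ℕ}
    (h : ∀ x : ι → R, ∏ i, x i ^ α i = ∏ i, x i ^ β i) : α = β := by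
  classical
  funext l
  have hl := h (Pi.mulSingle l 2)
  rw [Fintype.prod_eq_single l (fun i hi => by simp [hi]),
    Fintype.prod_eq_single l (fun i hi => by simp [hi])] at hl
  simp only [Pi.mulSingle_eq_same] at hl
  exact Nat.pow_right_injective le_rfl (by exact_mod_cast hl)

theorem eq_of_apply_ne_zero_of_forall_prod_mulVec_pow_eq {K : Type*} [Field K] [NeZero (2 : K)]
    {M : Matrix ι ι K} {α : ι → ℕ} (hM : ∀ x : ι → K, ∏ i, (M *ᵥ x) i ^ α i = ∏ i, x i ^ α i)
    {i j k : ι} (hi : α i ≠ 0) (hj : M i j ≠ 0) (hk : M i k ≠ 0) : j = k := by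
  by_contra hjk
  obtain ⟨x, hx, hMx⟩ := exists_forall_ne_zero_dotProduct_eq_zero hjk hj hk
  have h := hM x
  rw [Finset.prod_eq_zero (Finset.mem_univ i) (by simp [mulVec, hMx, hi])] at h
  exact (Finset.prod_ne_zero_iff.2 fun l _ => pow_ne_zero _ (hx l)) h.symm

theorem apply_perm_eq_of_forall_prod_mulVec_pow_eq {K : Type*} [Field K] [CharZero K]
    {M : Matrix ι ι K} {π : Equiv.Perm ι} {α : ι → ℕ} (hM0 : ∀ i j, j ≠ π i → M i j = 0)
    (hM : ∀ x : ι → K, ∏ i, (M *ᵥ x) i ^ α i = ∏ i, x i ^ α i) (i : ι) : α (π i) = α i := by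
  simp only [mulVec_apply_eq_mul_of_eq_zero hM0, mul_pow, Finset.prod_mul_distrib] at hM
  have hc : ∏ i, M i (π i) ^ α i = 1 := by simpa using hM 1
  have hperm : α ∘ π.symm = α := eq_of_forall_prod_pow_eq (R := K) fun x => by
    rw [← hM x, hc, one_mul, ← Equiv.prod_comp π]
    simp
  simpa using (congrFun hperm (π i)).symm

end

theorem monomial_invariance_monomial_matrix {n : ℕ} {K : Type*} [Field K] [CharZero K]
    (α : Fin n → ℕ) (hα : ∀ i, 1 ≤ α i) (A : GL (Fin n) K)
    (hfix : aeval (R := K)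
        (fun i => ∑ j, (A : Matrix (Fin n) (Fin n) K) i j • (X j : MvPolynomial (Fin n) K))
        (∏ i, X i ^ α i) = ∏ i, (X i : MvPolynomial (Fin n) K) ^ α i) :
    ∃ (π : Equiv.Perm (Fin n)) (lam : Fin n → K),
      (∀ i, lam i ≠ 0) ∧ (∀ i, α (π i) = α i) ∧
      ∀ i j, (A : Matrix (Fin n) (Fin n) K) i j = if j = π i then lam i else 0 := by
  set M : Matrix (Fin n) (Fin n) K := ↑A
  have hM : ∀ x : Fin n → K, ∏ i, (M *ᵥ x) i ^ α i = ∏ i, x i ^ α i := fun x => by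
    simpa only [eval_aeval_sum_smul_X, map_prod, map_pow, eval_X] using congrArg (eval x) hfix
  obtain ⟨π, hπ⟩ := exists_perm_ne_zero_iff_of_det_ne_zero (A.isUnit.map detMonoidHom).ne_zero
    fun i _ _ =>
      eq_of_apply_ne_zero_of_forall_prod_mulVec_pow_eq hM (Nat.one_le_iff_ne_zero.1 (hα i))
  have hM0 : ∀ i j, j ≠ π i → M i j = 0 := fun i j => not_imp_comm.1 (hπ i j).1
  refine ⟨π, fun i => M i (π i), fun i => (hπ i _).2 rfl,
    apply_perm_eq_of_forall_prod_mulVec_pow_eq hM0 hM, fun i j => ?_⟩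
  split_ifs with h
  · rw [h]
  · exact hM0 i j h
end

section
/- Let K be a field of characteristic 0 and m = x_1^{α_1}⋯x_n^{α_n} a monomial with all α_i ≥ 1. The set of matrices A ∈ M_n(K) with Σ_{i,j} a_{ij} x_j ∂m/∂x_i = 0 (the Lie algebra of m) equals the set of diagonal matrices diag(λ_1,...,λ_n) with Σ_{i=1}^n α_i λ_i = 0. In particular it is a linear subspace of dimension n−1. -/
/-!
For `m = x^d`, `x_j ∂m/∂x_i = d_i x^(d - e_i + e_j)`. The exponents `d - e_i + e_j` with `i ≠ j`
are pairwise distinct and different from `d`, while `x_i ∂m/∂x_i = d_i m`. Comparing coefficients,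
`A ∈ g_m` iff `A` is diagonal with `Σ d_i a_ii = 0`, so `g_m` is the image under `diag` of the
kernel of the nonzero functional `λ ↦ Σ d_i λ_i` and has dimension `n - 1`.
-/

open MvPolynomial Matrix

namespace Finsupp
variable {σ : Type*}

theorem tsub_single_add_single_eq_iff {d : σ →₀ ℕ} {i j i' j' : σ}
    (hi : single i 1 ≤ d) (hi' : single i' 1 ≤ d) :
    d - single i 1 + single j 1 = d - single i' 1 + single j' 1 ↔
      (i = i' ∧ j = j') ∨ (i = j ∧ i' = j') := by
  have shift_add {k l : σ} (hk : single k 1 ≤ d) :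
      d - single k 1 + single l 1 + single k 1 = d + single l 1 := by
    rw [add_right_comm, tsub_add_cancel_of_le hk]
  rw [← add_left_inj (single i 1 + single i' 1), ← add_assoc, shift_add hi, add_comm (single i 1),
    ← add_assoc, shift_add hi', add_assoc, add_assoc, add_right_inj,
    single_add_single_eq_single_add_single one_ne_zero one_ne_zero]
  grind

theorem tsub_single_add_single_eq_self_iff {d : σ →₀ ℕ} {i j : σ} (hi : single i 1 ≤ d) :
    d - single i 1 + single j 1 = d ↔ i = j := by
  conv_lhs => rhs; rw [← tsub_add_cancel_of_le hi]
  rw [tsub_single_add_single_eq_iff hi hi]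
  grind

end Finsupp

theorem Matrix.finrank_ker_dotProductBilin {ι K : Type*} [Fintype ι] [Field K] {w : ι → K}
    (hw : ∀ i, w i ≠ 0) :
    Module.finrank K (LinearMap.ker (dotProductBilin K K w)) = Fintype.card ι - 1 := by
  rcases isEmpty_or_nonempty ι with _ | ⟨⟨i⟩⟩
  · have := Submodule.finrank_le (LinearMap.ker (dotProductBilin K K w))
    simp only [Module.finrank_fintype_fun_eq_card, Fintype.card_eq_zero] at this ⊢
    omega
  · classical
    have hne : dotProductBilin K K w ≠ 0 := fun h => hw i <| by
      simpa using LinearMap.congr_fun h (Pi.single i 1)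
    have := Module.Dual.finrank_ker_add_one_of_ne_zero hne
    rw [Module.finrank_fintype_fun_eq_card] at this
    omega

namespace MvPolynomial

variable {σ R : Type*} [Fintype σ] [CommSemiring R]

/-- The derivative of `P` along the linear vector field `x ↦ A x`. -/
noncomputable def vectorFieldDeriv (P : MvPolynomial σ R) :
    Matrix σ σ R →ₗ[R] MvPolynomial σ R where
  toFun A := ∑ i, ∑ j, C (A i j) * (X j * pderiv i P)
  map_add' A B := by simp only [Matrix.add_apply, C_add, add_mul, Finset.sum_add_distrib]
  map_smul' c A := by
    simp only [Matrix.smul_apply, smul_eq_mul, C_mul, mul_assoc, Finset.mul_sum, RingHom.id_apply,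
      smul_eq_C_mul]

noncomputable def lieAlgebra (P : MvPolynomial σ R) : Submodule R (Matrix σ σ R) :=
  LinearMap.ker (vectorFieldDeriv P)

theorem vectorFieldDeriv_monomial (d : σ →₀ ℕ) (A : Matrix σ σ R) :
    vectorFieldDeriv (monomial d 1) A =
      ∑ i, ∑ j, monomial (d - .single i 1 + .single j 1) (d i * A i j) := by
  refine Finset.sum_congr rfl fun i _ => Finset.sum_congr rfl fun j _ => ?_
  rw [pderiv_monomial, one_mul, X, monomial_mul, C_mul_monomial, one_mul, add_comm, mul_comm]

variable [DecidableEq σ]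

theorem coeff_vectorFieldDeriv_monomial (d u : σ →₀ ℕ) (A : Matrix σ σ R) :
    coeff u (vectorFieldDeriv (monomial d 1) A) =
      ∑ i, ∑ j, if d - .single i 1 + .single j 1 = u then (d i : R) * A i j else 0 := by
  simp only [vectorFieldDeriv_monomial, coeff_sum, coeff_monomial]

theorem coeff_vectorFieldDeriv_monomial_of_ne {d : σ →₀ ℕ} (hd : ∀ i, d i ≠ 0)
    (A : Matrix σ σ R) {i₀ j₀ : σ} (h : i₀ ≠ j₀) :
    coeff (d - .single i₀ 1 + .single j₀ 1) (vectorFieldDeriv (monomial d 1) A) =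
      d i₀ * A i₀ j₀ := by
  have hle (i : σ) : Finsupp.single i 1 ≤ d :=
    Finsupp.single_le_iff.2 (Nat.one_le_iff_ne_zero.2 (hd i))
  simp only [coeff_vectorFieldDeriv_monomial, Finsupp.tsub_single_add_single_eq_iff (hle _) (hle _),
    h, and_false, or_false, ite_and, Finset.sum_ite_irrel, Finset.sum_ite_eq', Finset.mem_univ,
    if_true, Finset.sum_const_zero]

theorem coeff_self_vectorFieldDeriv_monomial {d : σ →₀ ℕ} (hd : ∀ i, d i ≠ 0)
    (A : Matrix σ σ R) :
    coeff d (vectorFieldDeriv (monomial d 1) A) = ∑ i, (d i : R) * A i i := by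
  have hle (i : σ) : Finsupp.single i 1 ≤ d :=
    Finsupp.single_le_iff.2 (Nat.one_le_iff_ne_zero.2 (hd i))
  simp only [coeff_vectorFieldDeriv_monomial, Finsupp.tsub_single_add_single_eq_self_iff (hle _),
    Finset.sum_ite_eq, Finset.mem_univ, if_true]

theorem vectorFieldDeriv_diagonal (P : MvPolynomial σ R) (lam : σ → R) :
    vectorFieldDeriv P (diagonal lam) = ∑ i, C (lam i) * (X i * pderiv i P) := by
  refine Finset.sum_congr rfl fun i _ => ?_
  rw [Finset.sum_eq_single i (fun j _ hj => by rw [diagonal_apply_ne _ hj.symm, C_0, zero_mul])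
    (by simp), diagonal_apply_eq]

theorem vectorFieldDeriv_monomial_diagonal (d : σ →₀ ℕ) (lam : σ → R) :
    vectorFieldDeriv (monomial d 1) (diagonal lam) = monomial d (∑ i, (d i : R) * lam i) := by
  rw [vectorFieldDeriv_diagonal, map_sum]
  refine Finset.sum_congr rfl fun i _ => ?_
  rw [X_mul_pderiv_monomial, nsmul_eq_mul, ← map_natCast (C : R →+* _), C_mul_monomial,
    C_mul_monomial, mul_one, mul_comm]

theorem mem_lieAlgebra_monomial_iff [NoZeroDivisors R] [CharZero R] {d : σ →₀ ℕ}
    (hd : ∀ i, d i ≠ 0) {A : Matrix σ σ R} :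
    A ∈ lieAlgebra (monomial d 1) ↔
      ∃ lam : σ → R, A = diagonal lam ∧ ∑ i, (d i : R) * lam i = 0 := by
  constructor
  · intro hA
    have hA : vectorFieldDeriv (monomial d 1) A = 0 := hA
    have hdiag : A.IsDiag := fun i j h => by
      have := coeff_vectorFieldDeriv_monomial_of_ne hd A h
      rw [hA, coeff_zero, eq_comm] at this
      exact (mul_eq_zero.1 this).resolve_left (Nat.cast_ne_zero.2 (hd i))
    refine ⟨diag A, hdiag.diagonal_diag.symm, ?_⟩
    have := coeff_self_vectorFieldDeriv_monomial hd A
    rwa [hA, coeff_zero, eq_comm] at this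
  · rintro ⟨lam, rfl, h⟩
    show vectorFieldDeriv _ _ = 0
    rw [vectorFieldDeriv_monomial_diagonal, h, monomial_zero]

section Field

variable {K : Type*} [Field K] [CharZero K] {d : σ →₀ ℕ}

theorem lieAlgebra_monomial_eq_map (hd : ∀ i, d i ≠ 0) :
    lieAlgebra (monomial d (1 : K)) =
      (LinearMap.ker (dotProductBilin K K fun i => (d i : K))).map (diagonalLinearMap σ K K) := by
  ext A
  rw [mem_lieAlgebra_monomial_iff hd, Submodule.mem_map]
  exact ⟨fun ⟨lam, hA, h⟩ => ⟨lam, h, hA.symm⟩, fun ⟨lam, h, hA⟩ => ⟨lam, hA.symm, h⟩⟩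

theorem finrank_lieAlgebra_monomial (hd : ∀ i, d i ≠ 0) :
    Module.finrank K (lieAlgebra (monomial d (1 : K))) = Fintype.card σ - 1 := by
  rw [lieAlgebra_monomial_eq_map hd,
    ← (Submodule.equivMapOfInjective _ diagonal_injective _).finrank_eq,
    finrank_ker_dotProductBilin fun i => Nat.cast_ne_zero.2 (hd i)]

end Field

end MvPolynomial

theorem lie_algebra_of_monomial {n : ℕ} {K : Type*} [Field K] [CharZero K]
    (α : Fin n → ℕ) (hα : ∀ i, 1 ≤ α i) :
    {A : Matrix (Fin n) (Fin n) K |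
        ∑ i, ∑ j, C (A i j) * (X j * pderiv i (∏ k, X k ^ α k)) = 0} =
      {A : Matrix (Fin n) (Fin n) K |
        ∃ lam : Fin n → K, A = Matrix.diagonal lam ∧ ∑ i, (α i : K) * lam i = 0} ∧
    Module.finrank K (Submodule.span K
      {A : Matrix (Fin n) (Fin n) K |
        ∑ i, ∑ j, C (A i j) * (X j * pderiv i (∏ k, X k ^ α k)) = 0}) = n - 1 := by
  set d : Fin n →₀ ℕ := Finsupp.equivFunOnFinite.symm α
  have hd (i : Fin n) : d i ≠ 0 := Nat.one_le_iff_ne_zero.1 (hα i)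
  have hm : (∏ k, X k ^ α k : MvPolynomial (Fin n) K) = monomial d 1 := by
    rw [monomial_eq, C_1, one_mul, Finsupp.prod_fintype _ _ fun _ => pow_zero _]
    rfl
  have hset : {A : Matrix (Fin n) (Fin n) K |
      ∑ i, ∑ j, C (A i j) * (X j * pderiv i (∏ k, X k ^ α k)) = 0} =
        lieAlgebra (monomial d (1 : K)) := by
    rw [hm]
    rfl
  refine ⟨?_, ?_⟩
  · rw [hset]
    ext A
    exact mem_lieAlgebra_monomial_iff hd
  · rw [hset, Submodule.span_eq, finrank_lieAlgebra_monomial hd, Fintype.card_fin]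
end

section
/- Let K be a field of characteristic 0 and f ∈ K[x_1,...,x_n] a nonzero homogeneous polynomial of degree d. Then f is a monomial depending on all n variables (with all exponents ≥ 1) if and only if the Lie algebra of f, i.e., {A ∈ M_n(K) : Σ_{i,j} a_{ij} x_j ∂f/∂x_i = 0}, is an (n−1)-dimensional subspace of the space of diagonal matrices. -/
/-!
For diagonal `A = diag v` the operator `Σ a_ij x_j ∂_i` multiplies each monomial `x^β` by
`⟨v, β⟩`, so the diagonal matrices in the Lie algebra form the orthogonal complement of the
exponent vectors of `f`, of dimension `n - rank`. For `f = c x^α` with all `α_i ≥ 1`, the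
entry `a_ij` (`i ≠ j`) is, up to the factor `c α_i ≠ 0`, the coefficient of `x^(α - e_i + e_j)`,
a monomial produced by no other term; so the Lie algebra is diagonal, of dimension `n - 1`.
Conversely, dimension `n - 1` forces the exponent vectors onto a line; as they all have the same
degree `d`, they coincide and `f` is a monomial. If `∂_i f = 0`, every `E_ij` lies in the Lie
algebra, which then can be diagonal only for `n = 1`, where `E_ii ≠ 0` contradicts dimension `0`.
-/

open MvPolynomial Matrix

lemma eq_of_finrank_le_one_of_map_eq {K V : Type*} [Field K] [AddCommGroup V] [Module K V]
    [FiniteDimensional K V] (h : Module.finrank K V ≤ 1) (φ : V →ₗ[K] K) {u w : V}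
    (huw : φ u = φ w) (hu : φ u ≠ 0) : u = w := by
  obtain ⟨v, hv⟩ := finrank_le_one_iff.mp h
  obtain ⟨a, rfl⟩ := hv u
  obtain ⟨b, rfl⟩ := hv w
  simp only [map_smul, smul_eq_mul] at huw hu
  rw [mul_right_cancel₀ (right_ne_zero_of_mul hu) huw]

namespace Finsupp

lemma single_add_tsub_single_eq_iff {σ : Type*} {β : σ →₀ ℕ} (hβ : ∀ k, β k ≠ 0)
    {i j k l : σ} :
    single j 1 + (β - single i 1) = single l 1 + (β - single k 1) ↔
      (i = k ∧ j = l) ∨ (i = j ∧ k = l) := by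
  have hcancel : ∀ m, β - single m 1 + single m 1 = β := fun m =>
    tsub_add_cancel_of_le (single_le_iff.mpr (Nat.one_le_iff_ne_zero.mpr (hβ m)))
  rw [← add_left_inj (single i 1 + single k 1),
    show single j 1 + (β - single i 1) + (single i 1 + single k 1) =
      single j 1 + single k 1 + (β - single i 1 + single i 1) by ac_rfl,
    show single l 1 + (β - single k 1) + (single i 1 + single k 1) =
      single l 1 + single i 1 + (β - single k 1 + single k 1) by ac_rfl,
    hcancel, hcancel, add_left_inj, single_add_single_eq_single_add_single one_ne_zero one_ne_zero]
  grind

end Finsupp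

namespace MvPolynomial

section CommSemiring

variable {σ R : Type*} [CommSemiring R]

lemma X_mul_pderiv_monomial' (i j : σ) (β : σ →₀ ℕ) (c : R) :
    X j * pderiv i (monomial β c) =
      monomial (Finsupp.single j 1 + (β - Finsupp.single i 1)) (c * β i) := by
  rw [pderiv_monomial, X, monomial_mul, one_mul]

lemma coeff_X_mul_pderiv (f : MvPolynomial σ R) (i : σ) (β : σ →₀ ℕ) :
    coeff β (X i * pderiv i f) = β i * coeff β f := by
  classical
  induction f using MvPolynomial.induction_on' with
  | monomial γ a =>
    rw [X_mul_pderiv_monomial, coeff_smul, coeff_monomial, nsmul_eq_mul]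
    split_ifs with h <;> simp [h]
  | add p q hp hq => rw [map_add, mul_add, coeff_add, hp, hq, coeff_add, mul_add]

variable [Fintype σ]

-- The Lie algebra `g_f` of the statement is `LinearMap.ker (lieMap f)`.
noncomputable def lieMap (f : MvPolynomial σ R) : Matrix σ σ R →ₗ[R] MvPolynomial σ R where
  toFun A := ∑ i, ∑ j, C (A i j) * (X j * pderiv i f)
  map_add' A B := by simp only [Matrix.add_apply, map_add, add_mul, Finset.sum_add_distrib]
  map_smul' c A := by
    simp only [Matrix.smul_apply, smul_eq_mul, map_mul, Finset.smul_sum, smul_eq_C_mul, mul_assoc,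
      RingHom.id_apply]

lemma lieMap_apply (f : MvPolynomial σ R) (A : Matrix σ σ R) :
    lieMap f A = ∑ i, ∑ j, C (A i j) * (X j * pderiv i f) := rfl

lemma coeff_lieMap_diagonal [DecidableEq σ] (f : MvPolynomial σ R) (v : σ → R)
    (β : σ →₀ ℕ) :
    coeff β (lieMap f (diagonal v)) = (∑ i, (β i : R) * v i) * coeff β f := by
  simp only [lieMap_apply, diagonal_apply, apply_ite C, map_zero, ite_mul, zero_mul,
    Finset.sum_ite_eq, Finset.mem_univ, if_true, coeff_sum, coeff_C_mul, coeff_X_mul_pderiv,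
    Finset.sum_mul]
  exact Finset.sum_congr rfl fun i _ => by ring

lemma coeff_lieMap_monomial_of_ne {β : σ →₀ ℕ} (hβ : ∀ k, β k ≠ 0) (c : R)
    (A : Matrix σ σ R) {i j : σ} (hij : i ≠ j) :
    coeff (Finsupp.single j 1 + (β - Finsupp.single i 1)) (lieMap (monomial β c) A) =
      A i j * (c * β i) := by
  classical
  simp only [lieMap_apply, X_mul_pderiv_monomial', C_mul_monomial, coeff_sum, coeff_monomial,
    Finsupp.single_add_tsub_single_eq_iff hβ, hij]
  simp [ite_and]

end CommSemiring

section Field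

variable {σ K : Type*} [Fintype σ] [Field K]

def exponentMatrix (f : MvPolynomial σ K) : Matrix f.support σ K :=
  of fun β i => (β.1 i : K)

lemma lieMap_diagonal_eq_zero_iff [DecidableEq σ] (f : MvPolynomial σ K) (v : σ → K) :
    lieMap f (diagonal v) = 0 ↔ exponentMatrix f *ᵥ v = 0 := by
  constructor
  · intro h
    funext β
    have hβ := congrArg (coeff β.1) h
    rw [coeff_lieMap_diagonal, coeff_zero] at hβ
    exact (mul_eq_zero.mp hβ).resolve_right (mem_support_iff.mp β.2)
  · intro h
    ext β
    rw [coeff_lieMap_diagonal, coeff_zero]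
    by_cases hβ : β ∈ f.support
    · rw [show ∑ i, (β i : K) * v i = (exponentMatrix f *ᵥ v) ⟨β, hβ⟩ from rfl, h,
        Pi.zero_apply, zero_mul]
    · rw [notMem_support_iff.mp hβ, mul_zero]

lemma ker_lieMap_eq_map_diagonal [DecidableEq σ] {f : MvPolynomial σ K}
    (hdiag : ∀ A ∈ LinearMap.ker (lieMap f), A.IsDiag) :
    LinearMap.ker (lieMap f) =
      (LinearMap.ker (exponentMatrix f).mulVecLin).map (diagonalLinearMap σ K K) := by
  ext A
  simp only [LinearMap.mem_ker, Submodule.mem_map, mulVecLin_apply, diagonalLinearMap_apply]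
  constructor
  · intro hA
    have hA' : diagonal A.diag = A := (hdiag A hA).diagonal_diag
    rw [← hA'] at hA
    exact ⟨A.diag, (lieMap_diagonal_eq_zero_iff f _).mp hA, hA'⟩
  · rintro ⟨v, hv, rfl⟩
    exact (lieMap_diagonal_eq_zero_iff f v).mpr hv

lemma finrank_ker_lieMap_add_rank [DecidableEq σ] {f : MvPolynomial σ K}
    (hdiag : ∀ A ∈ LinearMap.ker (lieMap f), A.IsDiag) :
    Module.finrank K (LinearMap.ker (lieMap f)) + (exponentMatrix f).rank = Fintype.card σ := by
  rw [ker_lieMap_eq_map_diagonal hdiag, ← (Submodule.equivMapOfInjective _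
    (diagonal_injective (α := K)) _).finrank_eq, add_comm, Matrix.rank,
    LinearMap.finrank_range_add_finrank_ker, Module.finrank_fintype_fun_eq_card]

lemma isDiag_of_lieMap_monomial_eq_zero [CharZero K] {β : σ →₀ ℕ} (hβ : ∀ k, β k ≠ 0)
    {c : K} (hc : c ≠ 0) {A : Matrix σ σ K} (hA : lieMap (monomial β c) A = 0) : A.IsDiag := by
  intro i j hij
  have h := coeff_lieMap_monomial_of_ne hβ c A hij
  rw [hA, coeff_zero, eq_comm] at h
  exact (mul_eq_zero.mp h).resolve_right (mul_ne_zero hc (Nat.cast_ne_zero.mpr (hβ i)))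

lemma rank_exponentMatrix_monomial [CharZero K] {β : σ →₀ ℕ} (hβ : β ≠ 0) {c : K}
    (hc : c ≠ 0) :
    (exponentMatrix (monomial β c)).rank = 1 := by
  classical
  have hsupp : (monomial β c).support = {β} := support_monomial.trans (if_neg hc)
  refine le_antisymm ?_ ?_
  · simpa [hsupp] using rank_le_card_height (exponentMatrix (monomial β c))
  · have hrow : (fun i => (β i : K)) ≠ 0 := by
      obtain ⟨i, hi⟩ := Finsupp.ne_iff.mp hβ
      exact fun h => hi (by simpa using congrFun h i)
    rw [rank_eq_finrank_span_row, ← finrank_span_singleton (K := K) hrow]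
    refine Submodule.finrank_mono (Submodule.span_mono ?_)
    rintro _ rfl
    exact ⟨⟨β, by simp [hsupp]⟩, rfl⟩

lemma eq_of_mem_support_of_rank_exponentMatrix_le_one [CharZero K] {f : MvPolynomial σ K} {d : ℕ}
    (hhom : f.IsHomogeneous d) (hrank : (exponentMatrix f).rank ≤ 1) {β γ : σ →₀ ℕ}
    (hβ : β ∈ f.support) (hγ : γ ∈ f.support) : β = γ := by
  have hdeg : ∀ δ ∈ f.support, δ.degree = d := fun δ hδ =>
    (hhom.degree_eq_sum_deg_support hδ).symm
  obtain rfl | hd := eq_or_ne d 0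
  · rw [(Finsupp.degree_eq_zero_iff β).mp (hdeg β hβ),
      (Finsupp.degree_eq_zero_iff γ).mp (hdeg γ hγ)]
  set W := Submodule.span K (Set.range (exponentMatrix f))
  have hrow : ∀ δ (hδ : δ ∈ f.support), (fun i => (δ i : K)) ∈ W := fun δ hδ =>
    Submodule.subset_span ⟨⟨δ, hδ⟩, rfl⟩
  set φ : W →ₗ[K] K := (∑ i, LinearMap.proj i).comp W.subtype
  have hφ : ∀ δ (hδ : δ ∈ f.support), φ ⟨_, hrow δ hδ⟩ = d := fun δ hδ => by
    simp [φ, ← hdeg δ hδ, Finsupp.degree_eq_sum]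
  have h := eq_of_finrank_le_one_of_map_eq (by rwa [rank_eq_finrank_span_row] at hrank) φ
    ((hφ β hβ).trans (hφ γ hγ).symm) (by rw [hφ β hβ]; exact_mod_cast hd)
  ext i
  simpa using congrFun (congrArg Subtype.val h) i

lemma pderiv_ne_zero_of_isDiag_of_finrank_ker_lieMap [DecidableEq σ] {f : MvPolynomial σ K}
    (hdiag : ∀ A ∈ LinearMap.ker (lieMap f), A.IsDiag)
    (hrank : Module.finrank K (LinearMap.ker (lieMap f)) = Fintype.card σ - 1) (i : σ) :
    pderiv i f ≠ 0 := by
  intro hi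
  have hsingle : ∀ j, Matrix.single i j (1 : K) ∈ LinearMap.ker (lieMap f) := by
    intro j
    rw [LinearMap.mem_ker, lieMap_apply]
    refine Finset.sum_eq_zero fun k _ => Finset.sum_eq_zero fun l _ => ?_
    obtain rfl | hk := eq_or_ne i k
    · rw [hi, mul_zero, mul_zero]
    · rw [single_apply_of_row_ne hk, map_zero, zero_mul]
  have hcard : Fintype.card σ = 1 := Fintype.card_eq_one_iff.mpr ⟨i, fun j => by_contra fun hj =>
    zero_ne_one ((hdiag _ (hsingle j) (Ne.symm hj)).symm.trans (single_apply_same i j 1))⟩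
  rw [hcard, Nat.sub_self, Submodule.finrank_eq_zero] at hrank
  have h := hsingle i
  rw [hrank, Submodule.mem_bot] at h
  simpa using congrFun (congrFun h i) i

lemma finrank_ker_lieMap_monomial [DecidableEq σ] [CharZero K] {β : σ →₀ ℕ}
    (hβ : ∀ k, β k ≠ 0) {c : K} (hc : c ≠ 0) :
    Module.finrank K (LinearMap.ker (lieMap (monomial β c))) = Fintype.card σ - 1 := by
  have hsum := finrank_ker_lieMap_add_rank fun A hA => isDiag_of_lieMap_monomial_eq_zero hβ hc hA
  obtain hσ | ⟨⟨i⟩⟩ := isEmpty_or_nonempty σ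
  · rw [Fintype.card_eq_zero] at hsum ⊢
    omega
  · have hβ0 : β ≠ 0 := fun h => hβ i (by rw [h, Finsupp.zero_apply])
    rw [rank_exponentMatrix_monomial hβ0 hc] at hsum
    omega

lemma exists_eq_monomial_of_finrank_ker_lieMap [DecidableEq σ] [CharZero K]
    {f : MvPolynomial σ K} (hf : f ≠ 0) {d : ℕ} (hhom : f.IsHomogeneous d)
    (hdiag : ∀ A ∈ LinearMap.ker (lieMap f), A.IsDiag)
    (hrank : Module.finrank K (LinearMap.ker (lieMap f)) = Fintype.card σ - 1) :
    ∃ β : σ →₀ ℕ, (∀ i, β i ≠ 0) ∧ f = monomial β (coeff β f) := by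
  have hsum := finrank_ker_lieMap_add_rank hdiag
  obtain ⟨β, hβ⟩ := support_nonempty.mpr hf
  have hf_eq : f = monomial β (coeff β f) := eq_monomial_of_support_subset_singleton fun γ hγ =>
    eq_of_mem_support_of_rank_exponentMatrix_le_one hhom (by omega) hγ hβ
  refine ⟨β, fun i hi => ?_, hf_eq⟩
  apply pderiv_ne_zero_of_isDiag_of_finrank_ker_lieMap hdiag hrank i
  rw [hf_eq, pderiv_monomial, hi, Nat.cast_zero, mul_zero, monomial_zero]

end Field

lemma C_mul_prod_X_pow_eq_monomial {σ R : Type*} [Fintype σ] [CommSemiring R] (c : R)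
    (α : σ → ℕ) :
    C c * ∏ i, X i ^ α i = monomial (Finsupp.equivFunOnFinite.symm α) c := by
  rw [monomial_eq, Finsupp.prod_pow]
  rfl

end MvPolynomial

theorem monomial_iff_lie_algebra_diagonal {n d : ℕ} {K : Type*} [Field K] [CharZero K]
    (f : MvPolynomial (Fin n) K) (hf : f ≠ 0) (hhom : f.IsHomogeneous d) :
    (∃ (c : K) (α : Fin n → ℕ), c ≠ 0 ∧ (∀ i, 1 ≤ α i) ∧ f = C c * ∏ i, X i ^ α i) ↔
      ((∀ A ∈ {A : Matrix (Fin n) (Fin n) K |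
            ∑ i, ∑ j, C (A i j) * (X j * pderiv i f) = 0}, A.IsDiag) ∧
        Module.finrank K (Submodule.span K
          {A : Matrix (Fin n) (Fin n) K |
            ∑ i, ∑ j, C (A i j) * (X j * pderiv i f) = 0}) = n - 1) := by
  rw [show {A : Matrix (Fin n) (Fin n) K | ∑ i, ∑ j, C (A i j) * (X j * pderiv i f) = 0} =
    LinearMap.ker (lieMap f) from rfl, Submodule.span_eq]
  constructor
  · rintro ⟨c, α, hc, hα, rfl⟩
    have hβ : ∀ i, Finsupp.equivFunOnFinite.symm α i ≠ 0 := fun i =>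
      Nat.one_le_iff_ne_zero.mp (hα i)
    rw [C_mul_prod_X_pow_eq_monomial]
    exact ⟨fun A hA => isDiag_of_lieMap_monomial_eq_zero hβ hc hA,
      by simpa using finrank_ker_lieMap_monomial hβ hc⟩
  · rintro ⟨hdiag, hrank⟩
    obtain ⟨β, hβ, hf_eq⟩ :=
      exists_eq_monomial_of_finrank_ker_lieMap hf hhom hdiag (by simpa using hrank)
    refine ⟨coeff β f, β, fun hc => hf (by rw [hf_eq, hc, monomial_zero]),
      fun i => Nat.one_le_iff_ne_zero.mpr (hβ i), ?_⟩
    rw [C_mul_prod_X_pow_eq_monomial, Finsupp.equivFunOnFinite_symm_coe, ← hf_eq]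
end

section
/- Let K be a field of characteristic 0, m = (x_1⋯x_n)^α, and f ∈ K[x_1,...,x_n] homogeneous of degree nα. Then f is a nonzero constant multiple of m if and only if the Lie algebra g_f of f equals the space of diagonal matrices of trace zero. -/
/-!
The operator `f ↦ x_j ∂f/∂x_i` sends the monomial `x^a` to `a_i x^(a - e_i + e_j)`. Hence a
diagonal matrix `diag d` acts on `x^a` by the scalar `∑ d_i a_i`: membership of
`diag(e_k - e_l)` in `g_f` forces `a_k = a_l` for every monomial `x^a` of `f`, and homogeneity of
degree `nα` then leaves only `x^a = m`. Conversely, on `m` the off-diagonal entry `b_ij` is the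
only contribution to the coefficient of `m x_j / x_i`, while a diagonal `B` acts by `α tr B`.
-/

open MvPolynomial Matrix

theorem Finsupp.tsub_single_add_single_eq_iff_s15 {σ : Type*} {t : σ →₀ ℕ} {i j i' j' : σ}
    (hi : t i ≠ 0) (hi' : t i' ≠ 0) :
    t - single i 1 + single j 1 = t - single i' 1 + single j' 1 ↔
      single j 1 + single i' 1 = single j' 1 + single i 1 := by
  have shift : ∀ {i j i' : σ}, t i ≠ 0 →
      t - single i 1 + single j 1 + (single i 1 + single i' 1) =
        t + (single j 1 + single i' 1) :=
    fun h => by rw [add_add_add_comm, sub_add_single_one_cancel h]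
  rw [← add_left_inj (single i 1 + single i' 1), shift hi, add_comm (single i 1), shift hi',
    add_right_inj]

theorem Finsupp.apply_eq_of_degree_eq_card_mul {σ : Type*} [Fintype σ] {a : σ →₀ ℕ}
    {α : ℕ} (h : ∀ k l, a k = a l) (hdeg : a.degree = Fintype.card σ * α) (k : σ) :
    a k = α := by
  rw [degree_eq_sum, Finset.sum_congr rfl fun l _ => h l k, Finset.sum_const, Finset.card_univ,
    smul_eq_mul] at hdeg
  exact Nat.eq_of_mul_eq_mul_left (Fintype.card_pos_iff.mpr ⟨k⟩) hdeg

namespace MvPolynomial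

variable {σ R : Type*}

section CommSemiring

variable [CommSemiring R]

theorem coeff_X_mul_pderiv_self (i : σ) (f : MvPolynomial σ R) (a : σ →₀ ℕ) :
    coeff a (X i * pderiv i f) = a i * coeff a f := by
  classical
  induction f using MvPolynomial.induction_on' with
  | monomial t c =>
    rw [X_mul_pderiv_monomial, coeff_smul, coeff_monomial]
    split_ifs with h
    · rw [h, nsmul_eq_mul]
    · rw [smul_zero, mul_zero]
  | add p q hp hq => rw [map_add, mul_add, coeff_add, coeff_add, hp, hq, mul_add]

theorem X_mul_pderiv_monomial_eq_monomial (i j : σ) (t : σ →₀ ℕ) (c : R) :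
    X j * pderiv i (monomial t c) =
      monomial (t - Finsupp.single i 1 + Finsupp.single j 1) (c * t i) := by
  rw [pderiv_monomial, X, monomial_mul, one_mul, add_comm]

variable [Fintype σ]

noncomputable def glAction (B : Matrix σ σ R) (f : MvPolynomial σ R) : MvPolynomial σ R :=
  ∑ i, ∑ j, C (B i j) * (X j * pderiv i f)

def lieAlgebraOf (f : MvPolynomial σ R) : Set (Matrix σ σ R) :=
  {B | glAction B f = 0}

theorem coeff_glAction_diagonal [DecidableEq σ] (d : σ → R) (f : MvPolynomial σ R)
    (a : σ →₀ ℕ) : coeff a (glAction (diagonal d) f) = (∑ i, d i * a i) * coeff a f := by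
  simp only [glAction, diagonal_apply, apply_ite C, map_zero, ite_mul, zero_mul,
    Finset.sum_ite_eq, Finset.mem_univ, if_true, coeff_sum, coeff_C_mul,
    coeff_X_mul_pderiv_self, Finset.sum_mul, mul_assoc]

theorem diagonal_mem_lieAlgebraOf_iff [DecidableEq σ] [NoZeroDivisors R] {d : σ → R}
    {f : MvPolynomial σ R} :
    diagonal d ∈ lieAlgebraOf f ↔ ∀ a ∈ f.support, ∑ i, d i * a i = 0 := by
  simp only [lieAlgebraOf, Set.mem_ofPred_eq, MvPolynomial.ext_iff, coeff_zero,
    coeff_glAction_diagonal, mul_eq_zero, mem_support_iff]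
  exact forall_congr' fun a => or_iff_not_imp_right

theorem coeff_glAction_monomial_of_ne (B : Matrix σ σ R) {t : σ →₀ ℕ} {i j : σ}
    (hij : i ≠ j) (hi : t i ≠ 0) (c : R) :
    coeff (t - Finsupp.single i 1 + Finsupp.single j 1) (glAction B (monomial t c)) =
      B i j * (c * t i) := by
  classical
  simp only [glAction, X_mul_pderiv_monomial_eq_monomial, C_mul_monomial, coeff_sum,
    coeff_monomial]
  rw [← Finset.sum_product', Finset.univ_product_univ, Fintype.sum_eq_single (i, j)]
  · simp
  rintro ⟨i', j'⟩ hne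
  by_cases hi' : t i' = 0
  · simp [hi']
  rw [if_neg]
  dsimp only
  rw [Finsupp.tsub_single_add_single_eq_iff_s15 hi' hi,
    Finsupp.single_add_single_eq_single_add_single one_ne_zero one_ne_zero]
  rintro (⟨rfl, rfl⟩ | ⟨-, -, rfl⟩ | ⟨h, -⟩)
  · exact hne rfl
  · exact hij rfl
  · exact two_ne_zero h

theorem apply_eq_zero_of_mem_lieAlgebraOf_monomial [NoZeroDivisors R] [CharZero R]
    {B : Matrix σ σ R} {t : σ →₀ ℕ} {c : R} (hc : c ≠ 0) {i j : σ} (hij : i ≠ j)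
    (hi : t i ≠ 0) (hB : B ∈ lieAlgebraOf (monomial t c)) : B i j = 0 := by
  have hcoeff := coeff_glAction_monomial_of_ne B hij hi c
  rw [show glAction B (monomial t c) = 0 from hB, coeff_zero] at hcoeff
  exact (mul_eq_zero.mp hcoeff.symm).resolve_right (mul_ne_zero hc (Nat.cast_ne_zero.mpr hi))

theorem lieAlgebraOf_monomial_of_forall_eq [DecidableEq σ] [NoZeroDivisors R] [CharZero R]
    {t : σ →₀ ℕ} {α : ℕ} (ht : ∀ k, t k = α) (hα : α ≠ 0) {c : R} (hc : c ≠ 0) :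
    lieAlgebraOf (monomial t c) = {B | B.IsDiag ∧ B.trace = 0} := by
  have diagonal_mem_iff (d : σ → R) :
      diagonal d ∈ lieAlgebraOf (monomial t c) ↔ ∑ i, d i = 0 := by
    classical
    simp only [diagonal_mem_lieAlgebraOf_iff, support_monomial, hc, if_false,
      Finset.mem_singleton, forall_eq, ht, ← Finset.sum_mul, mul_eq_zero, Nat.cast_eq_zero, hα,
      or_false]
  ext B
  constructor
  · intro hB
    have hdiag : B.IsDiag := fun i j hij =>
      apply_eq_zero_of_mem_lieAlgebraOf_monomial hc hij ((ht i).trans_ne hα) hB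
    rw [← hdiag.diagonal_diag, diagonal_mem_iff] at hB
    exact ⟨hdiag, hB⟩
  · rintro ⟨hdiag, htr⟩
    rw [← hdiag.diagonal_diag]
    exact (diagonal_mem_iff _).mpr htr

end CommSemiring

theorem mem_support_apply_eq_apply_of_subset_lieAlgebraOf [CommRing R] [NoZeroDivisors R]
    [CharZero R] [Fintype σ] [DecidableEq σ] {f : MvPolynomial σ R}
    (h : {B : Matrix σ σ R | B.IsDiag ∧ B.trace = 0} ⊆ lieAlgebraOf f) {a : σ →₀ ℕ}
    (ha : a ∈ f.support) (k l : σ) : a k = a l := by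
  have hmem := h ⟨isDiag_diagonal (Pi.single k 1 - Pi.single l 1), by
    simp [trace_diagonal, Finset.sum_sub_distrib]⟩
  have hsum := diagonal_mem_lieAlgebraOf_iff.mp hmem a ha
  simp only [Pi.sub_apply, sub_mul, Finset.sum_sub_distrib, Pi.single_apply, ite_mul, one_mul,
    zero_mul, Finset.sum_ite_eq', Finset.mem_univ, if_true] at hsum
  exact_mod_cast sub_eq_zero.mp hsum

end MvPolynomial

theorem multiple_of_power_of_product_iff_lie_algebra {n α : ℕ} (hα : 1 ≤ α)
    {K : Type*} [Field K] [CharZero K]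
    (f : MvPolynomial (Fin n) K) (hf : f ≠ 0) (hhom : f.IsHomogeneous (n * α)) :
    (∃ c : K, c ≠ 0 ∧ f = C c * (∏ k, X k) ^ α) ↔
      {B : Matrix (Fin n) (Fin n) K | ∑ i, ∑ j, C (B i j) * (X j * pderiv i f) = 0} =
        {B : Matrix (Fin n) (Fin n) K | B.IsDiag ∧ Matrix.trace B = 0} := by
  set s : Fin n →₀ ℕ := ∑ k, Finsupp.single k α
  have hs (k : Fin n) : s k = α := by simp [s, Finsupp.single_apply]
  have hm : (∏ k, X k : MvPolynomial (Fin n) K) ^ α = monomial s 1 := by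
    rw [← Finset.prod_pow]
    simp_rw [X_pow_eq_monomial]
    exact (monomial_sum_one _ _).symm
  change _ ↔ lieAlgebraOf f = _
  simp_rw [hm, C_mul_monomial, mul_one]
  constructor
  · rintro ⟨c, hc, rfl⟩
    exact lieAlgebraOf_monomial_of_forall_eq hs (by omega) hc
  · intro h
    have hsupp (a) (ha : a ∈ f.support) : a = s := by
      have hdeg : a.degree = Fintype.card (Fin n) * α := by
        rw [Fintype.card_fin, Finsupp.degree_eq_weight_one]
        exact hhom (mem_support_iff.mp ha)
      ext k
      have hconst := mem_support_apply_eq_apply_of_subset_lieAlgebraOf h.superset ha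
      rw [hs, Finsupp.apply_eq_of_degree_eq_card_mul hconst hdeg]
    obtain ⟨a, ha⟩ := support_nonempty.mpr hf
    exact ⟨coeff s f, hsupp a ha ▸ mem_support_iff.mp ha,
      eq_monomial_of_support_subset_singleton hsupp⟩
end
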